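/- arXiv:1903.04257 — 2 statements merged into one kernel-verified Lean document; each statement's English description precedes it below -/
import Mathlib

section
/- Let σ_S > 0, σ_μ ≥ 0, λ ≥ 0, ρ ∈ [-1,1], and set k = λ²σ_S² + 2σ_S σ_μ λ ρ + σ_μ², k₁ = √k σ_S + (λσ_S² + σ_S σ_μ ρ), k₂ = -√k σ_S + (λσ_S² + σ_S σ_μ ρ). Assume k > 0 and k₁ exp(2√k t/σ_S) ≠ k₂ for all t ≥ 0. Then the function Σ̂(t) = √k σ_S (k₁ exp(2(√k/σ_S)t) + k₂)/(k₁ exp(2(√k/σ_S)t) − k₂) − (λ + σ_μ ρ/σ_S) σ_S² satisfies the Riccati ODE dΣ̂/dt = −Σ̂²/σ_S² + (−2σ_μρ/σ_S − 2λ)Σ̂ + (1−ρ²)σ_μ². -/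
/-!
With `s = √k`, `a = s / σ_S` and `X = λσ_S² + σ_Sσ_μρ`, the candidate is `Σ̂ = sσ_S g - X`, where
`g = (k₁ e^{2at} + k₂) / (k₁ e^{2at} - k₂)` is a coth-type solution of `g' = a (1 - g²)` for any
constants `k₁, k₂`. Shifting by `X` removes the linear term of the Riccati equation, and since
`X² + (1 - ρ²)σ_μ²σ_S² = kσ_S²` it becomes `(Σ̂ + X)' = k - (Σ̂ + X)² / σ_S²`, which `sσ_S g` solves.
-/

open Real

theorem hasDerivAt_exp_add_div_exp_sub (a b₁ b₂ t : ℝ) (h : b₁ * exp (2 * a * t) - b₂ ≠ 0) :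
    HasDerivAt (fun u => (b₁ * exp (2 * a * u) + b₂) / (b₁ * exp (2 * a * u) - b₂))
      (a * (1 - ((b₁ * exp (2 * a * t) + b₂) / (b₁ * exp (2 * a * t) - b₂)) ^ 2)) t := by
  have hexp : HasDerivAt (fun u => b₁ * exp (2 * a * u)) (b₁ * (exp (2 * a * t) * (2 * a))) t :=
    (((hasDerivAt_id t).const_mul (2 * a)).exp.congr_deriv (by simp)).const_mul b₁
  refine ((hexp.add_const b₂).div (hexp.sub_const b₂) h).congr_deriv ?_
  field_simp
  ring

theorem kalman_bucy_variance_riccati_general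
    (σS σμ lam ρ : ℝ) (hσS : 0 < σS)
    (k k₁ k₂ : ℝ)
    (hk : k = lam ^ 2 * σS ^ 2 + 2 * σS * σμ * lam * ρ + σμ ^ 2)
    (hkpos : 0 < k)
    (hden : ∀ t : ℝ, 0 ≤ t → k₁ * Real.exp (2 * (Real.sqrt k / σS) * t) - k₂ ≠ 0)
    (Sig : ℝ → ℝ)
    (hSig : ∀ t : ℝ, Sig t =
        Real.sqrt k * σS * (k₁ * Real.exp (2 * (Real.sqrt k / σS) * t) + k₂) /
          (k₁ * Real.exp (2 * (Real.sqrt k / σS) * t) - k₂)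
        - (lam + σμ * ρ / σS) * σS ^ 2) :
    ∀ t : ℝ, 0 ≤ t →
      HasDerivAt Sig
        (-(Sig t) ^ 2 / σS ^ 2 + (-(2 * σμ * ρ) / σS - 2 * lam) * Sig t
          + (1 - ρ ^ 2) * σμ ^ 2) t := by
  intro t ht
  set s := √k
  have hs : s ^ 2 = k := sq_sqrt hkpos.le
  have hSig_eq : Sig = fun u =>
      s * σS * ((k₁ * exp (2 * (s / σS) * u) + k₂) / (k₁ * exp (2 * (s / σS) * u) - k₂))
        - (lam + σμ * ρ / σS) * σS ^ 2 := by
    funext u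
    rw [hSig u, mul_div_assoc]
  rw [hSig_eq]
  refine (((hasDerivAt_exp_add_div_exp_sub (s / σS) k₁ k₂ t (hden t ht)).const_mul
    (s * σS)).sub_const ((lam + σμ * ρ / σS) * σS ^ 2)).congr_deriv ?_
  beta_reduce
  generalize (k₁ * exp (2 * (s / σS) * t) + k₂) / (k₁ * exp (2 * (s / σS) * t) - k₂) = g
  have hσ : σS ≠ 0 := hσS.ne'
  field_simp
  linear_combination hs + hk

/-- The explicit conditional variance of the Kalman–Bucy filter satisfies the Riccati ODE. -/
theorem kalman_bucy_variance_riccati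
    (σS σμ lam ρ : ℝ) (hσS : 0 < σS) (hσμ : 0 ≤ σμ) (hlam : 0 ≤ lam)
    (hρ : ρ ∈ Set.Icc (-1 : ℝ) 1)
    (k k₁ k₂ : ℝ)
    (hk : k = lam ^ 2 * σS ^ 2 + 2 * σS * σμ * lam * ρ + σμ ^ 2)
    (hk₁ : k₁ = Real.sqrt k * σS + (lam * σS ^ 2 + σS * σμ * ρ))
    (hk₂ : k₂ = -Real.sqrt k * σS + (lam * σS ^ 2 + σS * σμ * ρ))
    (hkpos : 0 < k)
    (hden : ∀ t : ℝ, 0 ≤ t → k₁ * Real.exp (2 * (Real.sqrt k / σS) * t) - k₂ ≠ 0)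
    (Sig : ℝ → ℝ)
    (hSig : ∀ t : ℝ, Sig t =
        Real.sqrt k * σS * (k₁ * Real.exp (2 * (Real.sqrt k / σS) * t) + k₂) /
          (k₁ * Real.exp (2 * (Real.sqrt k / σS) * t) - k₂)
        - (lam + σμ * ρ / σS) * σS ^ 2) :
    ∀ t : ℝ, 0 ≤ t →
      HasDerivAt Sig
        (-(Sig t) ^ 2 / σS ^ 2 + (-(2 * σμ * ρ) / σS - 2 * lam) * Sig t
          + (1 - ρ ^ 2) * σμ ^ 2) t :=
  kalman_bucy_variance_riccati_general σS σμ lam ρ hσS k k₁ k₂ hk hkpos hden Sig hSig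
end

section
/- Let α, δ : [k,T] → ℝ be continuous nonnegative functions, z ≥ 0, and let c : [k,T] → ℝ be a continuous function. Define Z_t = z e^{−∫_k^t α(u)du} + ∫_k^t δ(u) e^{−∫_u^t α(s)ds} c_u du. If c_t ≥ Z_t for all t ∈ [k,T], then c_t ≥ z exp(∫_k^t (δ(v) − α(v)) dv) for all t ∈ [k,T]. -/
/-!
Write `A t = ∫_k^t α` and `G t = z + ∫_k^t δ u e^{A u} c_u du`, so that `Z = e^{-A} G`.
The habit constraint `Z ≤ c` reads `G ≤ e^{A} c`, hence `G' = δ e^{A} c ≥ δ G` because `δ ≥ 0`.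
The integrating factor `e^{-∫_k^t δ}` turns this into monotonicity, so `G t ≥ z e^{∫_k^t δ}`,
and then `c ≥ Z = e^{-A} G ≥ z e^{∫_k^t (δ - α)}`.
-/

open Set Real intervalIntegral

section Primitive

variable {a b : ℝ} {f : ℝ → ℝ}

theorem ContinuousOn.continuousOn_primitive (hab : a ≤ b) (hf : ContinuousOn f (Icc a b)) :
    ContinuousOn (fun x => ∫ u in a..x, f u) (Icc a b) := by
  rw [← uIcc_of_le hab] at hf ⊢
  exact continuousOn_primitive_interval (hf.integrableOn_compact isCompact_uIcc)

theorem ContinuousOn.intervalIntegrable_of_mem_Icc (hf : ContinuousOn f (Icc a b)) {t : ℝ}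
    (ht : t ∈ Icc a b) : IntervalIntegrable f MeasureTheory.volume a t :=
  (hf.mono (Icc_subset_Icc_right ht.2)).intervalIntegrable_of_Icc ht.1

theorem ContinuousOn.hasDerivAt_primitive (hf : ContinuousOn f (Icc a b)) {t : ℝ}
    (ht : t ∈ Ioo a b) : HasDerivAt (fun x => ∫ u in a..x, f u) (f t) t := by
  have hfIoo := hf.mono Ioo_subset_Icc_self
  exact integral_hasDerivAt_right (hf.intervalIntegrable_of_mem_Icc (Ioo_subset_Icc_self ht))
    (hfIoo.stronglyMeasurableAtFilter isOpen_Ioo t ht)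
    (hfIoo.continuousAt (isOpen_Ioo.mem_nhds ht))

end Primitive

theorem mul_exp_integral_le_of_mul_le_deriv {a b : ℝ} {δ G G' : ℝ → ℝ}
    (hab : a ≤ b) (hδ : ContinuousOn δ (Icc a b)) (hG : ContinuousOn G (Icc a b))
    (hG' : ∀ t ∈ Ioo a b, HasDerivAt G (G' t) t) (hle : ∀ t ∈ Ioo a b, δ t * G t ≤ G' t) :
    ∀ t ∈ Icc a b, G a * exp (∫ v in a..t, δ v) ≤ G t := by
  set D : ℝ → ℝ := fun t => ∫ v in a..t, δ v
  have hF : MonotoneOn (fun t => G t * exp (-D t)) (Icc a b) := by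
    refine monotoneOn_of_hasDerivWithinAt_nonneg (convex_Icc a b)
      (hG.mul (hδ.continuousOn_primitive hab).neg.rexp)
      (f' := fun t => exp (-D t) * (G' t - δ t * G t)) (fun t ht => ?_) (fun t ht => ?_)
    · rw [interior_Icc] at ht
      refine (((hG' t ht).mul (hδ.hasDerivAt_primitive ht).neg.exp).congr_deriv ?_).hasDerivWithinAt
      simp only [D, Pi.neg_apply]
      ring
    · rw [interior_Icc] at ht
      exact mul_nonneg (exp_pos _).le (sub_nonneg.2 (hle t ht))
  intro t ht
  have hFt := hF (left_mem_Icc.2 hab) ht ht.1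
  simp only [D, integral_same, neg_zero, exp_zero, mul_one] at hFt
  calc G a * exp (D t) ≤ G t * exp (-D t) * exp (D t) := by gcongr
    _ = G t := by rw [mul_assoc, ← exp_add, neg_add_cancel, exp_zero, mul_one]

theorem habit_eq_exp_neg_integral_mul {α δ c : ℝ → ℝ} {k t : ℝ} (z : ℝ)
    (hα : IntervalIntegrable α MeasureTheory.volume k t) :
    z * exp (-∫ u in k..t, α u) + ∫ u in k..t, δ u * exp (-∫ s in u..t, α s) * c u
      = exp (-∫ u in k..t, α u) * (z + ∫ u in k..t, δ u * exp (∫ s in k..u, α s) * c u) := by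
  rw [mul_add, ← integral_const_mul, mul_comm z]
  congr 1
  refine integral_congr fun u hu => ?_
  have hsplit : ∫ s in u..t, α s = (∫ s in k..t, α s) - ∫ s in k..u, α s :=
    (integral_interval_sub_left hα (hα.mono_set (uIcc_subset_uIcc_left hu))).symm
  simp only [hsplit, neg_sub, exp_sub, exp_neg]
  ring

theorem habit_constraint_subsistence_general
    (k T : ℝ) (hkT : k ≤ T) (α δ c : ℝ → ℝ)
    (hα : ContinuousOn α (Set.Icc k T)) (hδ : ContinuousOn δ (Set.Icc k T))
    (hc : ContinuousOn c (Set.Icc k T))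
    (hδpos : ∀ t ∈ Set.Icc k T, 0 ≤ δ t)
    (z : ℝ) (Z : ℝ → ℝ)
    (hZ : ∀ t ∈ Set.Icc k T,
      Z t = z * Real.exp (-∫ u in k..t, α u)
        + ∫ u in k..t, δ u * Real.exp (-∫ s in u..t, α s) * c u)
    (hcZ : ∀ t ∈ Set.Icc k T, Z t ≤ c t) :
    ∀ t ∈ Set.Icc k T, z * Real.exp (∫ v in k..t, (δ v - α v)) ≤ c t := by
  set A : ℝ → ℝ := fun t => ∫ u in k..t, α u
  set g : ℝ → ℝ := fun u => δ u * exp (A u) * c u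
  set G : ℝ → ℝ := fun t => z + ∫ u in k..t, g u
  have hZG : ∀ t ∈ Icc k T, Z t = exp (-A t) * G t := fun t ht =>
    (hZ t ht).trans (habit_eq_exp_neg_integral_mul z (hα.intervalIntegrable_of_mem_Icc ht))
  have hg : ContinuousOn g (Icc k T) := (hδ.mul (hα.continuousOn_primitive hkT).rexp).mul hc
  have hδG : ∀ t ∈ Ioo k T, δ t * G t ≤ g t := fun t ht => by
    have hGc : G t ≤ exp (A t) * c t := by
      rw [← inv_mul_le_iff₀ (exp_pos _), ← exp_neg, ← hZG t (Ioo_subset_Icc_self ht)]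
      exact hcZ t (Ioo_subset_Icc_self ht)
    simpa only [g, mul_assoc] using mul_le_mul_of_nonneg_left hGc (hδpos t (Ioo_subset_Icc_self ht))
  intro t ht
  have hGt : G k * exp (∫ v in k..t, δ v) ≤ G t :=
    mul_exp_integral_le_of_mul_le_deriv hkT hδ
      (continuousOn_const.add (hg.continuousOn_primitive hkT))
      (fun t ht => (hg.hasDerivAt_primitive ht).const_add z) hδG t ht
  have hGk : G k = z := by simp only [G, integral_same, add_zero]
  calc z * exp (∫ v in k..t, (δ v - α v)) = exp (-A t) * (z * exp (∫ v in k..t, δ v)) := by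
        rw [integral_sub (hδ.intervalIntegrable_of_mem_Icc ht)
          (hα.intervalIntegrable_of_mem_Icc ht), exp_sub, exp_neg]
        ring
    _ ≤ exp (-A t) * G t := by rw [← hGk]; gcongr
    _ = Z t := (hZG t ht).symm
    _ ≤ c t := hcZ t ht

/-- Addictive habit constraint implies consumption dominates the subsistence path. -/
theorem habit_constraint_subsistence
    (k T : ℝ) (hkT : k ≤ T) (α δ c : ℝ → ℝ)
    (hα : ContinuousOn α (Set.Icc k T)) (hδ : ContinuousOn δ (Set.Icc k T))
    (hc : ContinuousOn c (Set.Icc k T))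
    (hαpos : ∀ t ∈ Set.Icc k T, 0 ≤ α t)
    (hδpos : ∀ t ∈ Set.Icc k T, 0 ≤ δ t)
    (z : ℝ) (hz : 0 ≤ z) (Z : ℝ → ℝ)
    (hZ : ∀ t ∈ Set.Icc k T,
      Z t = z * Real.exp (-∫ u in k..t, α u)
        + ∫ u in k..t, δ u * Real.exp (-∫ s in u..t, α s) * c u)
    (hcZ : ∀ t ∈ Set.Icc k T, Z t ≤ c t) :
    ∀ t ∈ Set.Icc k T, z * Real.exp (∫ v in k..t, (δ v - α v)) ≤ c t :=
  habit_constraint_subsistence_general k T hkT α δ c hα hδ hc hδpos z Z hZ hcZ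
end
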